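/- Let L(λ) = P + Σ_{i=1}^N Y_i/(λ - λ_i) be the rational Gaudin Lax matrix, where P, Y₁,…,Y_N are the su(2) matrices associated to vectors p, y₁,…,y_N ∈ ℝ³ and λ₁,…,λ_N are pairwise distinct. Then for λ ∉ {λ₁,…,λ_N}, -tr(L(λ)²) = (1/2)⟨p,p⟩ + Σ_i [ H_i/(λ - λ_i) + C_i/(λ - λ_i)² ], where H_i = ⟨p, y_i⟩ + Σ_{j≠i} ⟨y_i, y_j⟩/(λ_i - λ_j) and C_i = (1/2)⟨y_i, y_i⟩. -/

import Mathlib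

open Matrix

/-- The standard identification of `ℝ³` with `su(2)`. -/
noncomputable def su2 (a : Fin 3 → ℝ) : Matrix (Fin 2) (Fin 2) ℂ :=
  (1 / 2 : ℂ) • !![-Complex.I * a 2, -Complex.I * a 0 - a 1;
                   -Complex.I * a 0 + a 1, Complex.I * a 2]

/-- The rational Gaudin Lax matrix `L(λ) = P + Σ_i Y_i/(λ - λ_i)`. -/
noncomputable def gaudinLax {N : ℕ} (p : Fin 3 → ℝ) (lam : Fin N → ℝ)
    (y : Fin N → Fin 3 → ℝ) (l : ℝ) : Matrix (Fin 2) (Fin 2) ℂ :=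
  su2 p + ∑ i : Fin N, ((l : ℂ) - (lam i : ℂ))⁻¹ • su2 (y i)

/-- The rational Gaudin Hamiltonian `H_i`. -/
noncomputable def gaudinH {N : ℕ} (p : Fin 3 → ℝ) (lam : Fin N → ℝ) (i : Fin N)
    (y : Fin N → Fin 3 → ℝ) : ℝ :=
  p ⬝ᵥ y i + ∑ j ∈ Finset.univ.filter (· ≠ i), (y i ⬝ᵥ y j) / (lam i - lam j)

/-! `su2` is `ℝ`-linear with `-tr (su2 a * su2 b) = ⟨a, b⟩ / 2`, so `L(λ) = su2 v` for
`v = p + Σ_i y_i / (λ - λ_i)` and `-tr L(λ)² = ⟨v, v⟩ / 2`. In the expansion of `⟨v, v⟩` the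
cross terms are split by partial fractions,
`1 / ((λ - λ_i)(λ - λ_j)) = (1 / (λ - λ_i) - 1 / (λ - λ_j)) / (λ_i - λ_j)`,
and symmetrising in `i, j` collects them into the residues `Σ_{j ≠ i} ⟨y_i, y_j⟩ / (λ_i - λ_j)`
of the Hamiltonians `H_i`. -/

open Finset

theorem su2_add (a b : Fin 3 → ℝ) : su2 (a + b) = su2 a + su2 b := by
  ext i j; fin_cases i <;> fin_cases j <;> simp [su2] <;> ring

theorem su2_smul (r : ℝ) (a : Fin 3 → ℝ) : su2 (r • a) = (r : ℂ) • su2 a := by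
  ext i j; fin_cases i <;> fin_cases j <;> simp [su2] <;> ring

noncomputable def su2LinearMap : (Fin 3 → ℝ) →ₗ[ℝ] Matrix (Fin 2) (Fin 2) ℂ where
  toFun := su2
  map_add' := su2_add
  map_smul' r a := by rw [su2_smul]; rfl

theorem neg_trace_su2_mul_su2 (a b : Fin 3 → ℝ) :
    -(su2 a * su2 b).trace = ((1 / 2 * (a ⬝ᵥ b) : ℝ) : ℂ) := by
  rw [su2, su2, smul_mul_smul_comm, mul_fin_two, trace_smul, trace_fin_two]
  simp only [of_apply, cons_val', cons_val_zero, cons_val_one, cons_val_fin_one, dotProduct,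
    Fin.sum_univ_three, smul_eq_mul]
  push_cast
  linear_combination (-(1 / 2) * (a 0 * b 0 + a 2 * b 2) : ℂ) * Complex.I_sq

theorem gaudinLax_eq_su2 {N : ℕ} (p : Fin 3 → ℝ) (lam : Fin N → ℝ) (y : Fin N → Fin 3 → ℝ)
    (l : ℝ) : gaudinLax p lam y l = su2 (p + ∑ i, (l - lam i)⁻¹ • y i) := by
  change _ = su2LinearMap _
  simp only [map_add, map_sum, map_smul, ← Complex.coe_smul, Complex.ofReal_inv,
    Complex.ofReal_sub]
  rfl

theorem sum_sum_erase_comm {ι M : Type*} [Fintype ι] [DecidableEq ι] [AddCommMonoid M]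
    (f : ι → ι → M) :
    ∑ i, ∑ j ∈ univ.erase i, f i j = ∑ i, ∑ j ∈ univ.erase i, f j i :=
  sum_comm' fun _ _ => by simp [ne_comm]

theorem sum_sum_erase_sub_mul_of_antisymm {ι R : Type*} [Fintype ι] [DecidableEq ι]
    [CommRing R] (c : ι → R) (h : ι → ι → R) (hh : ∀ i j, h j i = -h i j) :
    ∑ i, ∑ j ∈ univ.erase i, (c i - c j) * h i j = 2 * ∑ i, c i * ∑ j ∈ univ.erase i, h i j :=
  calc ∑ i, ∑ j ∈ univ.erase i, (c i - c j) * h i j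
      = ∑ i, ∑ j ∈ univ.erase i, c i * h i j + ∑ i, ∑ j ∈ univ.erase i, c j * h j i := by
        rw [← sum_add_distrib]
        refine sum_congr rfl fun i _ => ?_
        rw [← sum_add_distrib]
        exact sum_congr rfl fun j _ => by rw [hh]; ring
    _ = 2 * ∑ i, c i * ∑ j ∈ univ.erase i, h i j := by
        rw [← sum_sum_erase_comm (fun i j => c i * h i j), two_mul]
        simp only [mul_sum]

theorem inv_sub_mul_inv_sub {K : Type*} [Field K] {l a b : K} (ha : l ≠ a) (hb : l ≠ b)
    (hab : a ≠ b) : (l - a)⁻¹ * (l - b)⁻¹ = ((l - a)⁻¹ - (l - b)⁻¹) / (a - b) := by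
  have := sub_ne_zero.2 ha; have := sub_ne_zero.2 hb; have := sub_ne_zero.2 hab
  field_simp
  ring

theorem sum_sum_inv_sub_mul_inv_sub {ι K : Type*} [Fintype ι] [DecidableEq ι] [Field K]
    {μ : ι → K} (hμ : Function.Injective μ) {l : K} (hl : ∀ i, l ≠ μ i) (g : ι → ι → K)
    (hg : ∀ i j, g j i = g i j) :
    ∑ i, ∑ j, (l - μ i)⁻¹ * (l - μ j)⁻¹ * g i j =
      ∑ i, ((l - μ i)⁻¹ ^ 2 * g i i +
        2 * (l - μ i)⁻¹ * ∑ j ∈ univ.erase i, g i j / (μ i - μ j)) := by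
  have off_diagonal : ∑ i, ∑ j ∈ univ.erase i, (l - μ i)⁻¹ * (l - μ j)⁻¹ * g i j =
      2 * ∑ i, (l - μ i)⁻¹ * ∑ j ∈ univ.erase i, g i j / (μ i - μ j) := by
    rw [← sum_sum_erase_sub_mul_of_antisymm _ _ fun i j => by rw [hg, ← neg_sub, div_neg]]
    refine sum_congr rfl fun i _ => sum_congr rfl fun j hj => ?_
    rw [inv_sub_mul_inv_sub (hl i) (hl j) (hμ.ne (ne_of_mem_erase hj).symm)]
    ring
  rw [sum_congr rfl fun i _ => (add_sum_erase _ _ (mem_univ i)).symm, sum_add_distrib,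
    off_diagonal, mul_sum, ← sum_add_distrib]
  exact sum_congr rfl fun i _ => by ring

theorem dotProduct_self_add_sum_smul {ι m R : Type*} [Fintype ι] [Fintype m] [CommSemiring R]
    (p : m → R) (c : ι → R) (y : ι → m → R) :
    (p + ∑ i, c i • y i) ⬝ᵥ (p + ∑ i, c i • y i) =
      p ⬝ᵥ p + 2 * ∑ i, c i * (p ⬝ᵥ y i) + ∑ i, ∑ j, c i * c j * (y i ⬝ᵥ y j) := by
  have linear : ∑ i, c i * (p ⬝ᵥ y i) = p ⬝ᵥ ∑ i, c i • y i := by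
    simp only [dotProduct_sum, dotProduct_smul, smul_eq_mul]
  have quadratic : ∑ i, ∑ j, c i * c j * (y i ⬝ᵥ y j) =
      (∑ i, c i • y i) ⬝ᵥ ∑ j, c j • y j := by
    rw [sum_dotProduct]
    simp only [dotProduct_sum, smul_dotProduct, dotProduct_smul, smul_eq_mul, mul_assoc]
    exact sum_congr rfl fun i _ => sum_congr rfl fun j _ => mul_left_comm _ _ _
  rw [linear, quadratic, add_dotProduct, dotProduct_add, dotProduct_add,
    dotProduct_comm (∑ i, c i • y i) p]
  ring

theorem half_dotProduct_self_add_sum_inv_sub_smul {N : ℕ} (p : Fin 3 → ℝ) {lam : Fin N → ℝ}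
    (hlam : Function.Injective lam) (y : Fin N → Fin 3 → ℝ) {l : ℝ} (hl : ∀ i, l ≠ lam i) :
    1 / 2 * ((p + ∑ i, (l - lam i)⁻¹ • y i) ⬝ᵥ (p + ∑ i, (l - lam i)⁻¹ • y i)) =
      1 / 2 * (p ⬝ᵥ p) + ∑ i, (gaudinH p lam i y / (l - lam i) +
        1 / 2 * (y i ⬝ᵥ y i) / (l - lam i) ^ 2) := by
  rw [dotProduct_self_add_sum_smul,
    sum_sum_inv_sub_mul_inv_sub hlam hl _ fun i j => dotProduct_comm _ _,
    mul_add, mul_add, add_assoc, mul_sum, mul_sum, mul_sum, ← sum_add_distrib]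
  refine congrArg _ (sum_congr rfl fun i _ => ?_)
  rw [gaudinH, filter_ne', div_eq_mul_inv _ ((l - lam i) ^ 2), ← inv_pow]
  ring

/-- Expansion of the spectral invariant `-tr(L(λ)²)` of the rational Gaudin
Lax matrix in terms of the Hamiltonians `H_i` and Casimirs `C_i`. -/
theorem gaudin_spectral_invariants {N : ℕ} (p : Fin 3 → ℝ) (lam : Fin N → ℝ)
    (hlam : Function.Injective lam) (y : Fin N → Fin 3 → ℝ) (l : ℝ)
    (hl : ∀ i, l ≠ lam i) :
    -((gaudinLax p lam y l * gaudinLax p lam y l).trace) =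
      (((1 / 2 : ℝ) * (p ⬝ᵥ p) +
        ∑ i : Fin N, (gaudinH p lam i y / (l - lam i) +
          (1 / 2 : ℝ) * (y i ⬝ᵥ y i) / (l - lam i) ^ 2) : ℝ) : ℂ) := by
  rw [gaudinLax_eq_su2, neg_trace_su2_mul_su2,
    half_dotProduct_self_add_sum_inv_sub_smul p hlam y hl]
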